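/- Let s = (J−1)/2 and t = (K−1)/2, let h'(i,j) = h(J−1−i, K−1−j) be the coordinate-reversed PSF with extended form h'_e, and define g(m,n) = Σ_{(p,q) ∈ ZMod M × ZMod N} h'_e(m − p + s, n − q + t) · f(p,q). Then for all (m,n), g(m,n) = Σ_{i=0}^{J−1} Σ_{j=0}^{K−1} h(i,j) · f(m − s + i, n − t + j) (indices modulo M and N respectively); that is, this modified circular convolution satisfies the symmetric property (the processed pixel is aligned with the PSF's symmetric center) and its convolution structure is the original PSF h. -/
import Mathlib


/-- With `s = (J−1)/2`, `t = (K−1)/2` and the coordinate-reversed PSF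
`h'(i,j) = h(J−1−i, K−1−j)` with extended form `h'_e`, the modified circular convolution
`g(m,n) = Σ_{(p,q)} h'_e(m−p+s, n−q+t)·f(p,q)` satisfies the symmetric property with the
original PSF `h`: `g(m,n) = Σ_i Σ_j h(i,j)·f(m−s+i, n−t+j)`. -/
theorem modified_circular_convolution_2d_original_psf
    (M N J K : ℕ) [NeZero M] [NeZero N]
    (hJodd : Odd J) (hKodd : Odd K) (hJM : J < M) (hKN : K < N)
    (f : ZMod M × ZMod N → ℂ) (h : Fin J × Fin K → ℂ)
    (h' : Fin J × Fin K → ℂ)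
    (hh' : ∀ (i : Fin J) (j : Fin K),
      h' (i, j) = h (⟨J - 1 - i.val, by rcases hJodd with ⟨c, hc⟩; have := i.isLt; omega⟩,
                     ⟨K - 1 - j.val, by rcases hKodd with ⟨c, hc⟩; have := j.isLt; omega⟩))
    (he' : ZMod M × ZMod N → ℂ)
    (hhe' : ∀ (m : ZMod M) (n : ZMod N),
      he' (m, n) = if hmn : m.val < J ∧ n.val < K
        then h' (⟨m.val, hmn.1⟩, ⟨n.val, hmn.2⟩) else 0)
    (s t : ℕ) (hs : s = (J - 1) / 2) (ht : t = (K - 1) / 2)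
    (g : ZMod M × ZMod N → ℂ)
    (hg : ∀ (m : ZMod M) (n : ZMod N),
      g (m, n) = ∑ pq : ZMod M × ZMod N,
        he' (m - pq.1 + (s : ZMod M), n - pq.2 + (t : ZMod N)) * f pq) :
    ∀ (m : ZMod M) (n : ZMod N),
      g (m, n) = ∑ i : Fin J, ∑ j : Fin K,
        h (i, j) * f (m - (s : ZMod M) + ((i.val : ℕ) : ZMod M),
                      n - (t : ZMod N) + ((j.val : ℕ) : ZMod N)) := by
  intro m n
  obtain ⟨c, hc⟩ := hJodd
  obtain ⟨d, hd⟩ := hKodd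
  have hsJ : 2 * s + 1 = J := by omega
  have htK : 2 * t + 1 = K := by omega
  rw [hg]
  have hprod := Fintype.sum_prod_type (f := fun ij : Fin J × Fin K =>
    h ij * f (m - (s : ZMod M) + (ij.1.val : ZMod M), n - (t : ZMod N) + (ij.2.val : ZMod N)))
  simp only at hprod
  rw [← hprod]
  symm
  apply Finset.sum_of_injOn
    (fun ij : Fin J × Fin K =>
      ((m - (s : ZMod M) + (ij.1.val : ZMod M),
        n - (t : ZMod N) + (ij.2.val : ZMod N)) : ZMod M × ZMod N))
  · intro a _ b _ hab
    simp only [Prod.mk.injEq] at hab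
    have e1 : a.1 = b.1 := by
      have h1 := add_left_cancel hab.1
      have h2 := congrArg ZMod.val h1
      rw [ZMod.val_cast_of_lt (lt_trans a.1.isLt hJM),
        ZMod.val_cast_of_lt (lt_trans b.1.isLt hJM)] at h2
      exact Fin.ext h2
    have e2 : a.2 = b.2 := by
      have h1 := add_left_cancel hab.2
      have h2 := congrArg ZMod.val h1
      rw [ZMod.val_cast_of_lt (lt_trans a.2.isLt hKN),
        ZMod.val_cast_of_lt (lt_trans b.2.isLt hKN)] at h2
      exact Fin.ext h2
    exact Prod.ext e1 e2
  · intro ij _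
    exact Finset.mem_univ _
  · intro pq _ hpq
    rw [hhe']
    split
    · exfalso
      apply hpq
      rename_i hcond
      obtain ⟨h1, h2⟩ := hcond
      refine ⟨(⟨2*s - (m - pq.1 + (s : ZMod M)).val, by omega⟩,
               ⟨2*t - (n - pq.2 + (t : ZMod N)).val, by omega⟩),
              by simp, ?_⟩
      have hav : (m - pq.1 + (s : ZMod M)).val ≤ 2*s := by omega
      have hbv : (n - pq.2 + (t : ZMod N)).val ≤ 2*t := by omega
      have ca : (((m - pq.1 + (s : ZMod M)).val : ℕ) : ZMod M) = m - pq.1 + (s : ZMod M) := by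
        simp [ZMod.natCast_val, ZMod.cast_id]
      have cb : (((n - pq.2 + (t : ZMod N)).val : ℕ) : ZMod N) = n - pq.2 + (t : ZMod N) := by
        simp [ZMod.natCast_val, ZMod.cast_id]
      refine Prod.ext ?_ ?_
      · show m - (s : ZMod M) + ((2*s - (m - pq.1 + (s : ZMod M)).val : ℕ) : ZMod M) = pq.1
        push_cast [Nat.cast_sub hav]
        rw [ca]
        ring
      · show n - (t : ZMod N) + ((2*t - (n - pq.2 + (t : ZMod N)).val : ℕ) : ZMod N) = pq.2
        push_cast [Nat.cast_sub hbv]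
        rw [cb]
        ring
    · exact zero_mul _
  · intro ij _
    have e1 : m - (m - (s : ZMod M) + (ij.1.val : ZMod M)) + (s : ZMod M)
        = ((2*s - ij.1.val : ℕ) : ZMod M) := by
      have : ij.1.val ≤ 2*s := by have := ij.1.isLt; omega
      push_cast [Nat.cast_sub this]
      ring
    have e2 : n - (n - (t : ZMod N) + (ij.2.val : ZMod N)) + (t : ZMod N)
        = ((2*t - ij.2.val : ℕ) : ZMod N) := by
      have : ij.2.val ≤ 2*t := by have := ij.2.isLt; omega
      push_cast [Nat.cast_sub this]
      ring
    have v1 : (((2*s - ij.1.val : ℕ) : ZMod M)).val = 2*s - ij.1.val :=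
      ZMod.val_cast_of_lt (by omega)
    have v2 : (((2*t - ij.2.val : ℕ) : ZMod N)).val = 2*t - ij.2.val :=
      ZMod.val_cast_of_lt (by omega)
    simp only [e1, e2]
    rw [hhe']
    rw [dif_pos (by rw [v1, v2]; constructor <;> omega)]
    rw [hh']
    congr 1
    refine congrArg h (Prod.ext (Fin.ext ?_) (Fin.ext ?_))
    · show ij.1.val = J - 1 - _
      simp only [v1]
      have := ij.1.isLt
      omega
    · show ij.2.val = K - 1 - _
      simp only [v2]
      have := ij.2.isLt
      omega
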